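/- arXiv:2109.15288 — 5 statements merged into one kernel-verified Lean document; each statement's English description precedes it below -/
import Mathlib

section
/- The function η ↦ [η·ln(1 + 1/η)] / [1 − η·ln(1 + 1/η)] is strictly increasing on (0, ∞) and tends to +∞ as η → ∞. -/
/-!
The map is `t ↦ t / (1 - t)`, increasing on `(-∞, 1)` with limit `+∞` at `1⁻`, composed with
`g η = η log (1 + 1/η)`. Both bounds `1/(η+1) < log (1 + 1/η) < 1/η` come from `log x < x - 1`;
the upper one gives `g < 1`, the lower one `g' = log (1 + 1/η) - 1/(η+1) > 0`, and `g → 1`.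
-/

open Filter Topology Set

namespace Real

lemma one_sub_inv_lt_log {x : ℝ} (hx : 0 < x) (hx1 : x ≠ 1) : 1 - x⁻¹ < log x := by
  have h := log_lt_sub_one_of_pos (inv_pos.2 hx) (inv_ne_one.2 hx1)
  rw [log_inv] at h
  linarith

lemma log_one_add_one_div_lt {η : ℝ} (hη : 0 < η) : log (1 + 1 / η) < 1 / η := by
  have h := log_lt_sub_one_of_pos (x := 1 + 1 / η) (by positivity) (by simp [hη.ne'])
  linarith

lemma one_div_add_one_lt_log_one_add_one_div {η : ℝ} (hη : 0 < η) :
    1 / (η + 1) < log (1 + 1 / η) := by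
  have h := one_sub_inv_lt_log (x := 1 + 1 / η) (by positivity) (by simp [hη.ne'])
  have hinv : 1 - (1 + 1 / η)⁻¹ = 1 / (η + 1) := by field_simp; ring
  rwa [hinv] at h

lemma mul_log_one_add_one_div_lt_one {η : ℝ} (hη : 0 < η) : η * log (1 + 1 / η) < 1 :=
  calc η * log (1 + 1 / η) < η * (1 / η) := mul_lt_mul_of_pos_left (log_one_add_one_div_lt hη) hη
    _ = 1 := by field_simp

lemma hasDerivAt_mul_log_one_add_one_div {η : ℝ} (hη : 0 < η) :
    HasDerivAt (fun x : ℝ => x * log (1 + 1 / x)) (log (1 + 1 / η) - 1 / (η + 1)) η := by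
  have hinv : HasDerivAt (fun x : ℝ => 1 + 1 / x) (-(η ^ 2)⁻¹) η := by
    simpa [one_div] using (hasDerivAt_inv hη.ne').const_add (1 : ℝ)
  have h : HasDerivAt (fun x : ℝ => x * log (1 + 1 / x))
      (1 * log (1 + 1 / η) + η * (-(η ^ 2)⁻¹ / (1 + 1 / η))) η :=
    (hasDerivAt_id η).mul (hinv.log (by positivity))
  convert h using 1
  field_simp
  ring

lemma strictMonoOn_mul_log_one_add_one_div :
    StrictMonoOn (fun η : ℝ => η * log (1 + 1 / η)) (Ioi 0) := by
  refine strictMonoOn_of_deriv_pos (convex_Ioi 0)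
    (fun x hx => (hasDerivAt_mul_log_one_add_one_div hx).continuousAt.continuousWithinAt)
    fun x hx => ?_
  rw [interior_Ioi] at hx
  rw [(hasDerivAt_mul_log_one_add_one_div hx).deriv, sub_pos]
  exact one_div_add_one_lt_log_one_add_one_div hx

lemma tendsto_mul_log_one_add_one_div_nhdsLT_one :
    Tendsto (fun η : ℝ => η * log (1 + 1 / η)) atTop (𝓝[<] 1) := by
  refine tendsto_nhdsWithin_of_tendsto_nhds_of_eventually_within _ ?_ ?_
  · simpa using tendsto_mul_log_one_add_div_atTop 1
  · filter_upwards [eventually_gt_atTop 0] with η hη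
    exact mul_log_one_add_one_div_lt_one hη

end Real

lemma strictMonoOn_div_one_sub : StrictMonoOn (fun t : ℝ => t / (1 - t)) (Iio 1) := by
  intro a ha b hb hab
  have ha' : 0 < 1 - a := sub_pos.2 ha
  have hb' : 0 < 1 - b := sub_pos.2 hb
  rw [div_lt_div_iff₀ ha' hb']
  nlinarith

lemma tendsto_div_one_sub_nhdsLT_one : Tendsto (fun t : ℝ => t / (1 - t)) (𝓝[<] 1) atTop := by
  have hsub : Tendsto (fun t : ℝ => 1 - t) (𝓝[<] 1) (𝓝[>] 0) := by
    refine tendsto_nhdsWithin_of_tendsto_nhds_of_eventually_within _ ?_ ?_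
    · have h : Tendsto (fun t : ℝ => 1 - t) (𝓝 1) (𝓝 (1 - 1)) :=
        tendsto_const_nhds.sub tendsto_id
      rw [sub_self] at h
      exact tendsto_nhdsWithin_of_tendsto_nhds h
    · filter_upwards [self_mem_nhdsWithin] with t (ht : t < 1)
      exact sub_pos.2 ht
  simpa [div_eq_mul_inv] using (tendsto_nhdsWithin_of_tendsto_nhds tendsto_id).pos_mul_atTop
    one_pos (tendsto_inv_nhdsGT_zero.comp hsub)

theorem stmt_6 :
    StrictMonoOn
        (fun η : ℝ =>
          (η * Real.log (1 + 1 / η)) / (1 - η * Real.log (1 + 1 / η)))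
        (Set.Ioi 0) ∧
      Tendsto
        (fun η : ℝ =>
          (η * Real.log (1 + 1 / η)) / (1 - η * Real.log (1 + 1 / η)))
        atTop atTop :=
  ⟨strictMonoOn_div_one_sub.comp Real.strictMonoOn_mul_log_one_add_one_div
      fun _ hη => Real.mul_log_one_add_one_div_lt_one hη,
    tendsto_div_one_sub_nhdsLT_one.comp Real.tendsto_mul_log_one_add_one_div_nhdsLT_one⟩
end

section
/- Suppose F is a cumulative distribution function on [p_low, p_high] with F(p) = 1 + η − η·p_high/p for p ∈ [p_low, p_high], where η > 0 and p_low = (η/(1+η))·p_high. Then the expected value E[p] = p_high − ∫_{p_low}^{p_high} F(p) dp equals η·p_high·ln(1 + 1/η). -/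
open Real Set

theorem integral_const_sub_div {a b : ℝ} (h : (0 : ℝ) ∉ uIcc a b) (c d : ℝ) :
    ∫ x in a..b, (c - d / x) = (b - a) * c - d * log (b / a) := by
  have hinv : IntervalIntegrable (fun x : ℝ => x⁻¹) MeasureTheory.volume a b :=
    intervalIntegral.intervalIntegrable_inv (fun x hx hx0 => h (hx0 ▸ hx)) continuousOn_id
  simp only [div_eq_mul_inv d]
  rw [intervalIntegral.integral_sub intervalIntegrable_const (hinv.const_mul d),
    intervalIntegral.integral_const_mul, integral_inv h, intervalIntegral.integral_const,
    smul_eq_mul]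

theorem stmt_10 (η phigh plow : ℝ) (hη : 0 < η) (hp : 0 < phigh)
    (hplow : plow = (η / (1 + η)) * phigh)
    (F : ℝ → ℝ) (hF : ∀ p, F p = 1 + η - η * phigh / p) :
    phigh - ∫ p in plow..phigh, F p = η * phigh * Real.log (1 + 1 / η) := by
  have hplow_pos : 0 < plow := by rw [hplow]; positivity
  have hzero : (0 : ℝ) ∉ uIcc plow phigh := by
    rw [mem_uIcc]; rintro (⟨h, -⟩ | ⟨h, -⟩) <;> linarith
  have hratio : phigh / plow = 1 + 1 / η := by
    rw [hplow]; field_simp; ring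
  have hmass : (phigh - plow) * (1 + η) = phigh := by
    rw [hplow]; field_simp; ring
  simp only [hF]
  rw [integral_const_sub_div hzero, hratio, hmass]
  ring
end

section
/- Suppose F(p) = 1 + η − η·p_high/p on [p_low, p_high] with η > 0 and p_low = (η/(1+η))·p_high. Then ∫_{p_low}^{p_high} F(p) dp − ∫_{p_low}^{p_high} F(p)² dp = η·p_high·((1+2η)·ln(1 + 1/η) − 2). -/
/-!
Both `F` and `F²` are of the form `α + β / p + γ / p²`, which integrates through the antiderivative
`α p + β log p - γ / p`. The ratio of the endpoints is `p_high / p_low = 1 + 1 / η`, so every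
logarithm becomes `log (1 + 1 / η)` and the rest is algebra.
-/

open Real Set intervalIntegral

theorem integral_add_div_add_div_sq {l h : ℝ} (h0 : (0 : ℝ) ∉ uIcc l h) (α β γ : ℝ) :
    ∫ p in l..h, α + β / p + γ / p ^ 2 = α * (h - l) + β * log (h / l) + γ * (l⁻¹ - h⁻¹) := by
  have hne : ∀ p ∈ uIcc l h, p ≠ 0 := fun p hp hp0 => h0 (hp0 ▸ hp)
  have hl : l ≠ 0 := hne l left_mem_uIcc
  have hh : h ≠ 0 := hne h right_mem_uIcc
  have hderiv : ∀ p ∈ uIcc l h,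
      HasDerivAt (fun q => α * q + β * log q - γ * q⁻¹) (α + β / p + γ / p ^ 2) p := by
    intro p hp
    have hp0 := hne p hp
    refine ((((hasDerivAt_id' p).const_mul α).add ((hasDerivAt_log hp0).const_mul β)).sub
      ((hasDerivAt_inv hp0).const_mul γ)).congr_deriv ?_
    field_simp
    ring
  have hcont : ContinuousOn (fun p => α + β / p + γ / p ^ 2) (uIcc l h) :=
    (continuousOn_const.add (continuousOn_const.div continuousOn_id hne)).add
      (continuousOn_const.div (continuousOn_id.pow 2) fun p hp => pow_ne_zero 2 (hne p hp))
  rw [integral_eq_sub_of_hasDerivAt hderiv hcont.intervalIntegrable, log_div hh hl]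
  ring

theorem stmt_11 (η phigh plow : ℝ) (hη : 0 < η) (hp : 0 < phigh)
    (hplow : plow = (η / (1 + η)) * phigh)
    (F : ℝ → ℝ) (hF : ∀ p, F p = 1 + η - η * phigh / p) :
    (∫ p in plow..phigh, F p) - ∫ p in plow..phigh, (F p) ^ 2
      = η * phigh * ((1 + 2 * η) * Real.log (1 + 1 / η) - 2) := by
  have hplow_pos : 0 < plow := hplow ▸ by positivity
  have h0 : (0 : ℝ) ∉ uIcc plow phigh := fun h0 => by
    rcases mem_uIcc.mp h0 with hle | hle <;> linarith [hle.1]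
  -- these hold at `p = 0` too, since `x / 0 = 0`
  have hF₁ : (fun p => F p) = fun p => (1 + η) + -(η * phigh) / p + 0 / p ^ 2 := by
    funext p; rw [hF]; ring
  have hF₂ : (fun p => F p ^ 2) =
      fun p => (1 + η) ^ 2 + -(2 * (1 + η) * (η * phigh)) / p + (η * phigh) ^ 2 / p ^ 2 := by
    funext p; rw [hF]; ring
  have hratio : phigh / plow = 1 + 1 / η := by
    rw [hplow]; field_simp; ring
  rw [hF₁, hF₂, integral_add_div_add_div_sq h0, integral_add_div_add_div_sq h0, hratio, hplow]
  field_simp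
  ring
end

section
/- Let F be an atomless CDF on [a,b] with 0 < a < b and F strictly increasing. Then the equation F(ρ)·(ρ − E[p | p ≤ ρ]) = s has at most one solution ρ ∈ [a,b] for any s > 0. -/
open MeasureTheory Set

/-!
The reservation-price function `ρ ↦ F ρ * (ρ - E[p | p ≤ ρ]) = ∫_{p ≤ ρ} (ρ - p) dμ` grows at least
at rate `F ρ₁` beyond any `ρ₁`: raising the threshold from `ρ₁` to `ρ₂` adds `ρ₂ - ρ₁` to every
deficit already counted and only nonnegative new ones. A positive value `s` forces `F ρ > 0`, so two
solutions would both lie where this function is strictly increasing.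
-/

section TruncatedDeficit

variable {μ : Measure ℝ} [IsFiniteMeasure μ] {ρ ρ₁ ρ₂ : ℝ}

theorem measureReal_Iic_mul_sub_div_eq_setIntegral (hint : IntegrableOn (fun x => x) (Iic ρ) μ)
    (hne : μ.real (Iic ρ) ≠ 0) :
    μ.real (Iic ρ) * (ρ - (∫ x in Iic ρ, x ∂μ) / μ.real (Iic ρ)) = ∫ x in Iic ρ, (ρ - x) ∂μ := by
  rw [integral_sub (integrable_const ρ) hint, setIntegral_const, smul_eq_mul, mul_sub,
    mul_div_cancel₀ _ hne, mul_comm]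

theorem setIntegral_Iic_sub_add_le (hint : IntegrableOn (fun x => x) (Iic ρ₂) μ)
    (h : ρ₁ ≤ ρ₂) :
    ∫ x in Iic ρ₁, (ρ₁ - x) ∂μ + (ρ₂ - ρ₁) * μ.real (Iic ρ₁) ≤ ∫ x in Iic ρ₂, (ρ₂ - x) ∂μ := by
  have hint₂ : IntegrableOn (fun x => ρ₂ - x) (Iic ρ₂) μ := (integrable_const ρ₂).sub hint
  have hsplit : ∫ x in Iic ρ₁, (ρ₂ - x) ∂μ =
      ∫ x in Iic ρ₁, (ρ₁ - x) ∂μ + (ρ₂ - ρ₁) * μ.real (Iic ρ₁) := by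
    have hint₁ : IntegrableOn (fun x => ρ₁ - x) (Iic ρ₁) μ :=
      (integrable_const ρ₁).sub (hint.mono_set (Iic_subset_Iic.mpr h))
    rw [mul_comm, ← smul_eq_mul, ← setIntegral_const, ← integral_add hint₁ (integrable_const _)]
    congr 1 with x
    ring
  rw [← hsplit]
  refine setIntegral_mono_set hint₂ ?_ (Iic_subset_Iic.mpr h).eventuallyLE
  filter_upwards [ae_restrict_mem measurableSet_Iic] with x hx
  exact sub_nonneg.mpr hx

theorem strictMonoOn_setIntegral_Iic_sub (hint : ∀ ρ, IntegrableOn (fun x => x) (Iic ρ) μ) :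
    StrictMonoOn (fun ρ => ∫ x in Iic ρ, (ρ - x) ∂μ) {ρ | 0 < μ.real (Iic ρ)} := by
  intro ρ₁ hρ₁ ρ₂ _ hlt
  have hgain : 0 < (ρ₂ - ρ₁) * μ.real (Iic ρ₁) := mul_pos (sub_pos.mpr hlt) hρ₁
  linarith [setIntegral_Iic_sub_add_le (hint ρ₂) hlt.le]

end TruncatedDeficit

theorem stmt_16_general (a b : ℝ)
    (μ : Measure ℝ) [IsProbabilityMeasure μ]
    (hsupp : μ (Set.Icc a b)ᶜ = 0)
    (F : ℝ → ℝ) (hF : ∀ ρ, F ρ = (μ (Set.Iic ρ)).toReal)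
    (condExp : ℝ → ℝ)
    (hcond : ∀ ρ, condExp ρ = (∫ x in Set.Iic ρ, x ∂μ) / F ρ)
    (s : ℝ) (hs : 0 < s) :
    ∀ ρ₁ ∈ Set.Icc a b, ∀ ρ₂ ∈ Set.Icc a b,
      F ρ₁ * (ρ₁ - condExp ρ₁) = s → F ρ₂ * (ρ₂ - condExp ρ₂) = s →
        ρ₁ = ρ₂ := by
  have hint : Integrable (fun x : ℝ => x) μ := by
    refine Integrable.of_bound (C := max |a| |b|) aestronglyMeasurable_id ?_
    filter_upwards [measure_eq_zero_iff_ae_notMem.mp hsupp] with x hx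
    exact abs_le_max_abs_abs (not_not.mp hx).1 (not_not.mp hx).2
  have hF' : ∀ ρ, F ρ = μ.real (Iic ρ) := hF
  have hsolution : ∀ ρ, F ρ * (ρ - condExp ρ) = s →
      0 < μ.real (Iic ρ) ∧ ∫ x in Iic ρ, (ρ - x) ∂μ = s := by
    intro ρ h
    rw [hcond, hF'] at h
    have hne : μ.real (Iic ρ) ≠ 0 := by
      rintro h0
      rw [h0, zero_mul] at h
      exact hs.ne h
    refine ⟨measureReal_nonneg.lt_of_ne' hne, ?_⟩
    rwa [← measureReal_Iic_mul_sub_div_eq_setIntegral hint.integrableOn hne]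
  intro ρ₁ _ ρ₂ _ h₁ h₂
  obtain ⟨hpos₁, heq₁⟩ := hsolution ρ₁ h₁
  obtain ⟨hpos₂, heq₂⟩ := hsolution ρ₂ h₂
  exact (strictMonoOn_setIntegral_Iic_sub fun _ => hint.integrableOn).injOn hpos₁ hpos₂
    (heq₁.trans heq₂.symm)

theorem stmt_16 (a b : ℝ) (ha : 0 < a) (hab : a < b)
    (μ : Measure ℝ) [IsProbabilityMeasure μ] [NullSingletonClass μ]
    (hsupp : μ (Set.Icc a b)ᶜ = 0)
    (F : ℝ → ℝ) (hF : ∀ ρ, F ρ = (μ (Set.Iic ρ)).toReal)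
    (hmono : StrictMonoOn F (Set.Icc a b))
    (condExp : ℝ → ℝ)
    (hcond : ∀ ρ, condExp ρ = (∫ x in Set.Iic ρ, x ∂μ) / F ρ)
    (s : ℝ) (hs : 0 < s) :
    ∀ ρ₁ ∈ Set.Icc a b, ∀ ρ₂ ∈ Set.Icc a b,
      F ρ₁ * (ρ₁ - condExp ρ₁) = s → F ρ₂ * (ρ₂ - condExp ρ₂) = s →
        ρ₁ = ρ₂ :=
  stmt_16_general a b μ hsupp F hF condExp hcond s hs
end

section
/- Let t be a probability distribution on {1,...,K} and q ∈ (0,1). Define η(q) = [q/2 + δ·(1−q)·(τ(1−q/2) − τ(1−q)/2)] / [δ·(1−q)·(1 + τ(1−q) − 2τ(1−q/2))], where τ(x) = ∑_k t(k)x^k and δ ∈ (0,1). If t(k) > 0 for some k ≥ 2, then η(q) > 0 for all q ∈ (0,1), and η(q) → ∞ as q → 1⁻ and as q → 0⁺. -/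
/-!
The gap `1 + τ(1 - q) - 2 τ(1 - q/2) = τ(1 - q) + τ(1) - 2 τ(midpoint)` is positive on `(0, 1)`
because `τ` has nonnegative coefficients and a positive one in degree at least two, so it is
strictly convex on `[0, ∞)`. Hence both numerator and denominator of `η` are positive there.
At `q = 0` and `q = 1` the denominator vanishes while the numerator tends to `δ / 2` and `1 / 2`
respectively, so `η` blows up at both ends.
-/

open Filter Topology Set

section SumMulPow

variable {s : Finset ℕ} {t : ℕ → ℝ}

theorem sum_mul_pow_nonneg (ht : ∀ k ∈ s, 0 ≤ t k) {x : ℝ} (hx : 0 ≤ x) :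
    0 ≤ ∑ k ∈ s, t k * x ^ k :=
  Finset.sum_nonneg fun k hk => mul_nonneg (ht k hk) (pow_nonneg hx k)

theorem sum_mul_pow_mono (ht : ∀ k ∈ s, 0 ≤ t k) {x y : ℝ} (hx : 0 ≤ x) (hxy : x ≤ y) :
    ∑ k ∈ s, t k * x ^ k ≤ ∑ k ∈ s, t k * y ^ k :=
  Finset.sum_le_sum fun k hk => mul_le_mul_of_nonneg_left (pow_le_pow_left₀ hx hxy k) (ht k hk)

theorem two_mul_sum_mul_pow_midpoint_lt (ht : ∀ k ∈ s, 0 ≤ t k)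
    (hk : ∃ k ∈ s, 2 ≤ k ∧ 0 < t k) {x y : ℝ} (hx : 0 ≤ x) (hy : 0 ≤ y) (hxy : x ≠ y) :
    2 * ∑ k ∈ s, t k * ((x + y) / 2) ^ k < ∑ k ∈ s, t k * x ^ k + ∑ k ∈ s, t k * y ^ k := by
  have hmid : (x + y) / 2 = (1 / 2 : ℝ) • x + (1 / 2 : ℝ) • y := by
    simp only [smul_eq_mul]; ring
  rw [← sub_pos, Finset.mul_sum, ← Finset.sum_add_distrib, ← Finset.sum_sub_distrib]
  obtain ⟨k₀, hk₀s, hk₀2, hk₀t⟩ := hk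
  refine Finset.sum_pos' (fun k hks => ?_) ⟨k₀, hk₀s, ?_⟩
  · have hconv := (convexOn_pow k).2 (mem_Ici.2 hx) (mem_Ici.2 hy)
      (by norm_num : (0 : ℝ) ≤ 1 / 2) (by norm_num : (0 : ℝ) ≤ 1 / 2) (by norm_num)
    rw [← hmid] at hconv
    simp only [smul_eq_mul] at hconv
    nlinarith [ht k hks]
  · have hconv := (strictConvexOn_pow hk₀2).2 (mem_Ici.2 hx) (mem_Ici.2 hy) hxy
      (by norm_num : (0 : ℝ) < 1 / 2) (by norm_num : (0 : ℝ) < 1 / 2) (by norm_num)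
    rw [← hmid] at hconv
    simp only [smul_eq_mul] at hconv
    nlinarith

end SumMulPow

theorem tendsto_div_atTop_of_continuousAt {N D : ℝ → ℝ} {a : ℝ} {S : Set ℝ}
    (hN : ContinuousAt N a) (hD : ContinuousAt D a) (hNa : 0 < N a) (hDa : D a = 0)
    (hDpos : ∀ᶠ x in 𝓝[S] a, 0 < D x) :
    Tendsto (fun x => N x / D x) (𝓝[S] a) atTop := by
  have hD0 : Tendsto D (𝓝[S] a) (𝓝[>] 0) :=
    tendsto_nhdsWithin_iff.2 ⟨hDa ▸ hD.tendsto.mono_left nhdsWithin_le_nhds, hDpos⟩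
  simpa only [div_eq_mul_inv, Function.comp_def] using
    (hN.tendsto.mono_left nhdsWithin_le_nhds).pos_mul_atTop hNa (tendsto_inv_nhdsGT_zero.comp hD0)

theorem stmt_18_general (K : ℕ) (t : ℕ → ℝ) (ht : ∀ k, 0 ≤ t k)
    (hsum : ∑ k ∈ Finset.Icc 1 K, t k = 1)
    (δ : ℝ) (hδ : δ ∈ Set.Ioo (0 : ℝ) 1)
    (τ : ℝ → ℝ) (hτ : ∀ x, τ x = ∑ k ∈ Finset.Icc 1 K, t k * x ^ k)
    (hk2 : ∃ k, 2 ≤ k ∧ k ≤ K ∧ 0 < t k)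
    (η : ℝ → ℝ)
    (hη : ∀ q : ℝ, η q =
      (q / 2 + δ * (1 - q) * (τ (1 - q / 2) - τ (1 - q) / 2)) /
        (δ * (1 - q) * (1 + τ (1 - q) - 2 * τ (1 - q / 2)))) :
    (∀ q ∈ Set.Ioo (0 : ℝ) 1, 0 < η q) ∧
      Tendsto η (𝓝[<] 1) atTop ∧ Tendsto η (𝓝[>] 0) atTop := by
  obtain ⟨hδ0, -⟩ := hδ
  have ht' : ∀ k ∈ Finset.Icc 1 K, 0 ≤ t k := fun k _ => ht k
  have hτc : Continuous τ := by rw [show τ = _ from funext hτ]; fun_prop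
  have hτ1 : τ 1 = 1 := by simpa [hτ] using hsum
  have hD : ∀ q ∈ Ioo (0 : ℝ) 1, 0 < δ * (1 - q) * (1 + τ (1 - q) - 2 * τ (1 - q / 2)) := by
    rintro q ⟨hq0, hq1⟩
    have hconv := two_mul_sum_mul_pow_midpoint_lt ht'
      (by obtain ⟨k, h2, hK, hk⟩ := hk2; exact ⟨k, Finset.mem_Icc.2 ⟨by omega, hK⟩, h2, hk⟩)
      (x := 1 - q) (y := 1) (by linarith) zero_le_one (by linarith)
    rw [show (1 - q + 1) / 2 = 1 - q / 2 by ring, ← hτ, ← hτ, ← hτ, hτ1] at hconv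
    exact mul_pos (mul_pos hδ0 (by linarith)) (by linarith)
  have hN : ∀ q ∈ Ioo (0 : ℝ) 1, 0 < q / 2 + δ * (1 - q) * (τ (1 - q / 2) - τ (1 - q) / 2) := by
    rintro q ⟨hq0, hq1⟩
    have hmono : τ (1 - q) ≤ τ (1 - q / 2) := by
      simpa only [hτ] using sum_mul_pow_mono ht' (x := 1 - q) (y := 1 - q / 2)
        (by linarith) (by linarith)
    have hnonneg : 0 ≤ τ (1 - q) := by
      simpa only [hτ] using sum_mul_pow_nonneg ht' (x := 1 - q) (by linarith)
    have := mul_nonneg (mul_nonneg hδ0.le (sub_nonneg.2 hq1.le))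
      (by linarith : 0 ≤ τ (1 - q / 2) - τ (1 - q) / 2)
    linarith
  obtain rfl : η = _ := funext hη
  refine ⟨fun q hq => div_pos (hN q hq) (hD q hq), ?_, ?_⟩
  · exact tendsto_div_atTop_of_continuousAt (by fun_prop) (by fun_prop) (by norm_num)
      (by norm_num) (eventually_of_mem (Ioo_mem_nhdsLT one_pos) hD)
  · exact tendsto_div_atTop_of_continuousAt (by fun_prop) (by fun_prop)
      (by norm_num [hτ1]; positivity) (by norm_num [hτ1])
      (eventually_of_mem (Ioo_mem_nhdsGT one_pos) hD)

theorem stmt_18 (K : ℕ) (t : ℕ → ℝ) (ht : ∀ k, 0 ≤ t k)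
    (hsupp : ∀ k, t k ≠ 0 → k ∈ Finset.Icc 1 K)
    (hsum : ∑ k ∈ Finset.Icc 1 K, t k = 1)
    (δ : ℝ) (hδ : δ ∈ Set.Ioo (0 : ℝ) 1)
    (τ : ℝ → ℝ) (hτ : ∀ x, τ x = ∑ k ∈ Finset.Icc 1 K, t k * x ^ k)
    (hk2 : ∃ k, 2 ≤ k ∧ k ≤ K ∧ 0 < t k)
    (η : ℝ → ℝ)
    (hη : ∀ q : ℝ, η q =
      (q / 2 + δ * (1 - q) * (τ (1 - q / 2) - τ (1 - q) / 2)) /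
        (δ * (1 - q) * (1 + τ (1 - q) - 2 * τ (1 - q / 2)))) :
    (∀ q ∈ Set.Ioo (0 : ℝ) 1, 0 < η q) ∧
      Tendsto η (𝓝[<] 1) atTop ∧ Tendsto η (𝓝[>] 0) atTop :=
  stmt_18_general K t ht hsum δ hδ τ hτ hk2 η hη
end
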